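/- For every γ > 0 there exists a constant C(γ) > 0 such that for every R' > 0 and every s ∈ W_γ(R') with Haar coefficients α_{(j,k)}: (a) for every t > 0, the number of pairs (j,k) ∈ Λ_∞ with |α_{(j,k)}| > t/2 is at most C(γ)·R'²·t^{−2/(1+2γ)}; and (b) for every integer D ≥ 1 there exists a subset Λ ⊂ Λ_∞ with |Λ| ≤ D such that Σ_{(j,k) ∈ Λ_∞ ∖ Λ} α_{(j,k)}² ≤ C(γ)·R'^{2+4γ}·D^{−2γ}. -/

import Mathlib

open MeasureTheory Filter Set
open scoped ENNReal

noncomputable section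

/-- The Haar mother wavelet `ψ = 1_{[0,1/2)} - 1_{[1/2,1)}`. -/
def haarPsi (x : ℝ) : ℝ :=
  Set.indicator (Set.Ico (0 : ℝ) (1 / 2)) (fun _ => (1 : ℝ)) x
    - Set.indicator (Set.Ico (1 / 2 : ℝ) 1) (fun _ => (1 : ℝ)) x

/-- The Haar function `φ_{(j,k)}(x) = 2^{j/2} ψ(2^j x - k)`. -/
def haarFn (j k : ℕ) (x : ℝ) : ℝ := (2 : ℝ) ^ ((j : ℝ) / 2) * haarPsi ((2 : ℝ) ^ j * x - k)

/-- Haar coefficient `α_{(j,k)} = ⟨s, φ_{(j,k)}⟩`. -/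
def haarCoeff (s : ℝ → ℝ) (j k : ℕ) : ℝ := ∫ x in Set.Icc (0 : ℝ) 1, s x * haarFn j k x

/-- `α₀ = ⟨s, φ₀⟩ = ∫₀¹ s`. -/
def meanVal (s : ℝ → ℝ) : ℝ := ∫ x in Set.Icc (0 : ℝ) 1, s x

/-- Squared L² distance from `s` to the set of constant functions on `[0,1]`. -/
def distSqToConst (s : ℝ → ℝ) : ℝ := ∫ x in Set.Icc (0 : ℝ) 1, (s x - meanVal s) ^ 2

/-- L² distance from `s` to the set `S₀` of constant functions on `[0,1]`. -/
def sepDist (s : ℝ → ℝ) : ℝ := Real.sqrt (distSqToConst s)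

/-- Lebesgue measure restricted to `[0,1]` (the uniform distribution on `[0,1]`). -/
def unif01 : Measure ℝ := volume.restrict (Set.Icc (0 : ℝ) 1)

/-- The Besov body `B^δ_{2,∞}(R)`. -/
def besovBody (δ R : ℝ) : Set (ℝ → ℝ) :=
  {s | (∀ x ∈ Set.Icc (0 : ℝ) 1, 0 ≤ s x) ∧ MemLp s 2 unif01 ∧
    ∀ j : ℕ, ∑ k ∈ Finset.range (2 ^ j), (haarCoeff s j k) ^ 2
      ≤ R ^ 2 * (2 : ℝ) ^ (-(2 * (j : ℝ) * δ))}

/-- The weak Besov body `W_γ(R')`. -/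
def weakBesovBody (γ R' : ℝ) : Set (ℝ → ℝ) :=
  {s | (∀ x ∈ Set.Icc (0 : ℝ) 1, 0 ≤ s x) ∧ MemLp s 2 unif01 ∧
    ∀ t : ℝ, 0 < t →
      ∑' j : ℕ, ∑ k ∈ Finset.range (2 ^ j),
          (if (haarCoeff s j k) ^ 2 ≤ t then (haarCoeff s j k) ^ 2 else 0)
        ≤ R' ^ 2 * t ^ (2 * γ / (1 + 2 * γ))}

/-- The ball `L^∞(R'')` of functions bounded by `R''` on `[0,1]`. -/
def linfBall (R'' : ℝ) : Set (ℝ → ℝ) := {s | ∀ x ∈ Set.Icc (0 : ℝ) 1, |s x| ≤ R''}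

/-- Observation space: the number of points and the sequence of points. -/
abbrev Obs : Type := ℕ × (ℕ → ℝ)

/-- Law of one point of the process: density `s/∫s` on `[0,1]`
(uniform as irrelevant convention if `∫ s = 0`). -/
def pointLaw (s : ℝ → ℝ) : Measure ℝ :=
  if meanVal s = 0 then unif01
  else unif01.withDensity fun x => ENNReal.ofReal (s x / meanVal s)

/-- Padding of a finite vector into a sequence. -/
def pad (n : ℕ) (v : Fin n → ℝ) : ℕ → ℝ := fun i => if h : i < n then v ⟨i, h⟩ else 0

/-- Poisson probability `e^{-μ} μ^n / n!`. -/
def poissonWeight (μ : ℝ) (n : ℕ) : ℝ≥0∞ := ENNReal.ofReal (Real.exp (-μ) * μ ^ n / n.factorial)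

/-- Product of `n` i.i.d. copies of a law. -/
def iidLaw (ν : Measure ℝ) (n : ℕ) : Measure (Fin n → ℝ) := Measure.pi fun _ => ν

/-- The law `P_s` of the observation `(N_L, (X_1, …, X_{N_L}))` of a Poisson process with
intensity `s` w.r.t. `L·dx` on `[0,1]`: `N_L` is Poisson with parameter `L ∫₀¹ s`, and given
`N_L = n` the points are `n` i.i.d. draws from `s/∫s` (padded by `0` beyond the `N_L`-th
coordinate, which a test may not look at). -/
def obsLaw (L : ℝ) (s : ℝ → ℝ) : Measure Obs :=
  Measure.sum fun n : ℕ =>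
    poissonWeight (L * meanVal s) n •
      Measure.map (fun v => (n, pad n v)) (iidLaw (pointLaw s) n)

/-- A test: a measurable `{0,1}`-valued function of the observation, depending on the sequence
of points only through its first `N_L` coordinates. -/
def IsTest (Φ : Obs → Bool) : Prop :=
  Measurable Φ ∧ ∀ n : ℕ, ∀ x y : ℕ → ℝ, (∀ i < n, x i = y i) → Φ (n, x) = Φ (n, y)

/-- A level `α` test: `P_s(Φ = 1) ≤ α` for every nonnegative constant intensity. -/
def IsLevel (L α : ℝ) (Φ : Obs → Bool) : Prop :=
  ∀ c : ℝ, 0 ≤ c → obsLaw L (fun _ => c) {ω | Φ ω = true} ≤ ENNReal.ofReal α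

/-- Uniform separation rate `ρ(Φ, S₁, β)` of a test over a class `S₁`. -/
def sepRate (L : ℝ) (Φ : Obs → Bool) (S₁ : Set (ℝ → ℝ)) (β : ℝ) : ℝ :=
  sInf {ρ : ℝ | 0 < ρ ∧ ∀ s ∈ S₁, ρ < sepDist s →
    obsLaw L s {ω | Φ ω = false} ≤ ENNReal.ofReal β}

/-- Minimax separation rate `ρ̲_L(S₁, α, β)`: infimum of the uniform separation rates over all
level `α` tests. -/
def minimaxRate (L : ℝ) (S₁ : Set (ℝ → ℝ)) (α β : ℝ) : ℝ :=
  sInf {r : ℝ | ∃ Φ : Obs → Bool, IsTest Φ ∧ IsLevel L α Φ ∧ r = sepRate L Φ S₁ β}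

/-!
The Haar functions are orthonormal in `L²([0,1])`: functions of one level have disjoint dyadic
supports, and a coarser one is constant on the support of a finer one, which has mean zero.
Bessel's inequality therefore makes the series in the definition of `W_γ(R')` summable (a
non-summable `tsum` would be the junk value `0`) and dominates its finite partial sums.

With `q = 2γ/(1+2γ)`, the coefficients with `u < α² ≤ 2u` number at most `R'² (2u)^q / u`;
peeling off the layers `u, 2u, 4u, …` gives a geometric series, so
`#{α² > u} ≤ K(q) R'² u^(q-1)`, and (a) is the case `u = (t/2)²`. For (b), `Λ` is the set of
coefficients with `α² > u`, where `u` makes this bound equal to `D`; the energy left outside `Λ` is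
a sum truncated at level `u`, hence at most `R'² u^q`.
-/

open scoped Finset

def dyadicIco (n m : ℕ) : Set ℝ := Ico ((m : ℝ) / 2 ^ n) ((m + 1) / 2 ^ n)

lemma mem_dyadicIco_iff {n m : ℕ} {x : ℝ} :
    x ∈ dyadicIco n m ↔ (m : ℝ) ≤ 2 ^ n * x ∧ 2 ^ n * x < m + 1 := by
  rw [dyadicIco, mem_Ico, div_le_iff₀ (by positivity), lt_div_iff₀ (by positivity), mul_comm x]

lemma mem_dyadicIco_iff_floor {n m : ℕ} {x : ℝ} :
    x ∈ dyadicIco n m ↔ ⌊(2 : ℝ) ^ n * x⌋ = m := by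
  rw [mem_dyadicIco_iff, Int.floor_eq_iff]
  push_cast
  rfl

lemma measurableSet_dyadicIco (n m : ℕ) : MeasurableSet (dyadicIco n m) := measurableSet_Ico

lemma left_mem_dyadicIco (n m : ℕ) : (m : ℝ) / 2 ^ n ∈ dyadicIco n m := by
  rw [mem_dyadicIco_iff]
  field_simp
  constructor <;> linarith

lemma dyadicIco_subset_Icc {n m : ℕ} (hm : m < 2 ^ n) : dyadicIco n m ⊆ Icc 0 1 := by
  have hm' : (m : ℝ) + 1 ≤ 2 ^ n := by exact_mod_cast hm
  intro x hx
  rw [mem_dyadicIco_iff] at hx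
  constructor <;> nlinarith [(by positivity : (0 : ℝ) < 2 ^ n), (by positivity : (0 : ℝ) ≤ m)]

lemma dyadicIco_add_subset (n d m : ℕ) : dyadicIco (n + d) m ⊆ dyadicIco n (m / 2 ^ d) := by
  intro x hx
  rw [mem_dyadicIco_iff_floor] at hx ⊢
  have hscale : (2 : ℝ) ^ n * x = 2 ^ (n + d) * x / ((2 ^ d : ℕ) : ℝ) := by
    push_cast
    rw [pow_add]
    field_simp
  rw [hscale, Int.floor_div_natCast, hx]
  push_cast
  rfl

lemma volume_real_dyadicIco (n m : ℕ) : volume.real (dyadicIco n m) = (2 ^ n)⁻¹ := by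
  rw [dyadicIco, Real.volume_real_Ico_of_le (by gcongr; linarith)]
  field_simp
  ring

lemma integral_indicator_dyadicIco {n m : ℕ} (hm : m < 2 ^ n) :
    ∫ x in Icc (0 : ℝ) 1, (dyadicIco n m).indicator (1 : ℝ → ℝ) x = (2 ^ n)⁻¹ := by
  rw [integral_indicator_one (measurableSet_dyadicIco n m), measureReal_restrict_apply
    (measurableSet_dyadicIco n m), inter_eq_left.2 (dyadicIco_subset_Icc hm),
    volume_real_dyadicIco]

lemma two_rpow_div_two_sq (j : ℕ) : ((2 : ℝ) ^ ((j : ℝ) / 2)) ^ 2 = 2 ^ j := by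
  rw [← Real.rpow_mul_natCast zero_le_two]
  norm_num

lemma haarFn_eq_indicator (j k : ℕ) (x : ℝ) :
    haarFn j k x = 2 ^ ((j : ℝ) / 2) * ((dyadicIco (j + 1) (2 * k)).indicator (1 : ℝ → ℝ) x
      - (dyadicIco (j + 1) (2 * k + 1)).indicator (1 : ℝ → ℝ) x) := by
  have hl : 2 ^ j * x - k ∈ Ico (0 : ℝ) (1 / 2) ↔ x ∈ dyadicIco (j + 1) (2 * k) := by
    rw [mem_Ico, mem_dyadicIco_iff, pow_succ]
    push_cast
    constructor <;> rintro ⟨h1, h2⟩ <;> constructor <;> linarith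
  have hr : 2 ^ j * x - k ∈ Ico (1 / 2 : ℝ) 1 ↔ x ∈ dyadicIco (j + 1) (2 * k + 1) := by
    rw [mem_Ico, mem_dyadicIco_iff, pow_succ]
    push_cast
    constructor <;> rintro ⟨h1, h2⟩ <;> constructor <;> linarith
  classical
  rw [haarFn, haarPsi, indicator_apply, indicator_apply, indicator_apply, indicator_apply,
    if_congr hl rfl rfl, if_congr hr rfl rfl]
  rfl

lemma haarPsi_sq (z : ℝ) : haarPsi z ^ 2 = (Ico (0 : ℝ) 1).indicator 1 z := by
  simp only [haarPsi, indicator_apply, mem_Ico, Pi.one_apply]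
  split_ifs <;> grind

lemma haarFn_sq_eq_indicator (j k : ℕ) (x : ℝ) :
    haarFn j k x ^ 2 = 2 ^ j * (dyadicIco j k).indicator (1 : ℝ → ℝ) x := by
  have h : 2 ^ j * x - k ∈ Ico (0 : ℝ) 1 ↔ x ∈ dyadicIco j k := by
    rw [mem_Ico, mem_dyadicIco_iff]
    constructor <;> rintro ⟨h1, h2⟩ <;> constructor <;> linarith
  classical
  rw [haarFn, mul_pow, two_rpow_div_two_sq, haarPsi_sq, indicator_apply, indicator_apply,
    if_congr h rfl rfl]
  rfl

lemma haarFn_eq_zero_of_notMem {j k : ℕ} {x : ℝ} (hx : x ∉ dyadicIco j k) : haarFn j k x = 0 := by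
  simpa [indicator_of_notMem hx] using haarFn_sq_eq_indicator j k x

lemma haarFn_eq_of_mem_dyadicIco {j k m : ℕ} {x y : ℝ} (hx : x ∈ dyadicIco (j + 1) m)
    (hy : y ∈ dyadicIco (j + 1) m) : haarFn j k x = haarFn j k y := by
  classical
  rw [mem_dyadicIco_iff_floor] at hx hy
  simp only [haarFn_eq_indicator, indicator_apply, mem_dyadicIco_iff_floor, hx, hy, Pi.one_apply]

instance : IsFiniteMeasure unif01 := by
  rw [unif01, isFiniteMeasure_restrict]
  exact measure_Icc_lt_top.ne

lemma integrableOn_indicator_dyadicIco (n m : ℕ) :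
    IntegrableOn ((dyadicIco n m).indicator (1 : ℝ → ℝ)) (Icc 0 1) :=
  continuous_const.integrableOn_Icc.indicator (measurableSet_dyadicIco n m)

lemma integral_haarFn {j k : ℕ} (hk : k < 2 ^ j) : ∫ x in Icc (0 : ℝ) 1, haarFn j k x = 0 := by
  have h₀ : 2 * k < 2 ^ (j + 1) := by rw [pow_succ]; omega
  have h₁ : 2 * k + 1 < 2 ^ (j + 1) := by rw [pow_succ]; omega
  simp only [haarFn_eq_indicator]
  rw [integral_const_mul, integral_sub (integrableOn_indicator_dyadicIco _ _)
    (integrableOn_indicator_dyadicIco _ _), integral_indicator_dyadicIco h₀,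
    integral_indicator_dyadicIco h₁, sub_self, mul_zero]

lemma integral_haarFn_sq {j k : ℕ} (hk : k < 2 ^ j) :
    ∫ x in Icc (0 : ℝ) 1, haarFn j k x ^ 2 = 1 := by
  simp only [haarFn_sq_eq_indicator]
  rw [integral_const_mul, integral_indicator_dyadicIco hk, mul_inv_cancel₀ (by positivity)]

lemma haarFn_mul_haarFn_of_ne {j k k' : ℕ} (h : k ≠ k') (x : ℝ) :
    haarFn j k x * haarFn j k' x = 0 := by
  by_cases hx : x ∈ dyadicIco j k
  · have hx' : x ∉ dyadicIco j k' := fun hx' => h <| by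
      rw [mem_dyadicIco_iff_floor] at hx hx'
      exact_mod_cast hx.symm.trans hx'
    rw [haarFn_eq_zero_of_notMem hx', mul_zero]
  · rw [haarFn_eq_zero_of_notMem hx, zero_mul]

lemma haarFn_mul_haarFn_of_lt {j j' k k' : ℕ} (h : j < j') (x : ℝ) :
    haarFn j k x * haarFn j' k' x = haarFn j k (k' / 2 ^ j') * haarFn j' k' x := by
  by_cases hx : x ∈ dyadicIco j' k'
  · obtain ⟨d, rfl⟩ : ∃ d, j' = j + 1 + d := ⟨j' - (j + 1), by omega⟩
    rw [haarFn_eq_of_mem_dyadicIco (dyadicIco_add_subset _ _ _ hx)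
      (dyadicIco_add_subset _ _ _ (left_mem_dyadicIco _ _))]
  · rw [haarFn_eq_zero_of_notMem hx, mul_zero, mul_zero]

lemma integral_haarFn_mul_haarFn {j k j' k' : ℕ} (hk : k < 2 ^ j) (hk' : k' < 2 ^ j') :
    ∫ x in Icc (0 : ℝ) 1, haarFn j k x * haarFn j' k' x
      = if (j, k) = (j', k') then 1 else 0 := by
  rcases lt_trichotomy j j' with h | rfl | h
  · rw [if_neg (by grind)]
    simp only [haarFn_mul_haarFn_of_lt h]
    rw [integral_const_mul, integral_haarFn hk', mul_zero]
  · by_cases hkk : k = k'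
    · subst hkk
      simp only [← sq, integral_haarFn_sq hk, if_true]
    · simp only [haarFn_mul_haarFn_of_ne hkk, integral_zero, Prod.mk.injEq, hkk, and_false,
        if_false]
  · rw [if_neg (by grind)]
    simp only [mul_comm (haarFn j k _), haarFn_mul_haarFn_of_lt h]
    rw [integral_const_mul, integral_haarFn hk, mul_zero]

lemma memLp_haarFn (j k : ℕ) : MemLp (haarFn j k) 2 unif01 := by
  have hind (m : ℕ) : MemLp ((dyadicIco (j + 1) m).indicator (1 : ℝ → ℝ)) 2 unif01 :=
    (memLp_const (1 : ℝ)).indicator (measurableSet_dyadicIco _ _)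
  have h := ((hind (2 * k)).sub (hind (2 * k + 1))).const_mul (2 ^ ((j : ℝ) / 2))
  convert h using 1
  ext x
  rw [haarFn_eq_indicator, Pi.sub_apply]

theorem MeasureTheory.MemLp.inner_toLp_toLp {α : Type*} [MeasurableSpace α] {μ : Measure α}
    {f g : α → ℝ} (hf : MemLp f 2 μ) (hg : MemLp g 2 μ) :
    inner ℝ (hf.toLp f) (hg.toLp g) = ∫ x, f x * g x ∂μ := by
  rw [L2.inner_def]
  refine integral_congr_ae ?_
  filter_upwards [hf.coeFn_toLp, hg.coeFn_toLp] with x hfx hgx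
  rw [hfx, hgx, RCLike.inner_apply, conj_trivial, mul_comm]

abbrev HaarIndex : Type := {p : ℕ × ℕ // p.2 < 2 ^ p.1}

def haarLp (p : HaarIndex) : Lp ℝ 2 unif01 := (memLp_haarFn p.1.1 p.1.2).toLp _

lemma orthonormal_haarLp : Orthonormal ℝ haarLp := by
  rw [orthonormal_iff_ite]
  intro p q
  rw [haarLp, haarLp, MemLp.inner_toLp_toLp]
  refine (integral_haarFn_mul_haarFn p.2 q.2).trans ?_
  simp only [Prod.mk.eta, Subtype.ext_iff]

lemma sum_sq_haarCoeff_le {s : ℝ → ℝ} (hs : MemLp s 2 unif01) {F : Finset (ℕ × ℕ)}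
    (hF : ∀ p ∈ F, p.2 < 2 ^ p.1) : ∑ p ∈ F, haarCoeff s p.1 p.2 ^ 2 ≤ ‖hs.toLp s‖ ^ 2 := by
  classical
  have hcoeff (p : HaarIndex) :
      ‖inner ℝ (haarLp p) (hs.toLp s)‖ ^ 2 = haarCoeff s p.1.1 p.1.2 ^ 2 := by
    rw [haarLp, MemLp.inner_toLp_toLp, Real.norm_eq_abs, sq_abs, haarCoeff]
    simp only [mul_comm]
    rfl
  rw [← Finset.sum_subtype_of_mem _ hF]
  simpa only [hcoeff] using orthonormal_haarLp.sum_inner_products_le (hs.toLp s)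

def haarIndicesBelow (n : ℕ) : Finset (ℕ × ℕ) :=
  (Finset.range n ×ˢ Finset.range (2 ^ n)).filter fun p => p.2 < 2 ^ p.1

lemma mem_haarIndicesBelow {n : ℕ} {p : ℕ × ℕ} :
    p ∈ haarIndicesBelow n ↔ p.1 < n ∧ p.2 < 2 ^ p.1 := by
  simp only [haarIndicesBelow, Finset.mem_filter, Finset.mem_product, Finset.mem_range]
  constructor
  · rintro ⟨⟨hj, -⟩, hk⟩
    exact ⟨hj, hk⟩
  · rintro ⟨hj, hk⟩
    exact ⟨⟨hj, hk.trans_le (Nat.pow_le_pow_right two_pos hj.le)⟩, hk⟩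

lemma sum_haarIndicesBelow (n : ℕ) (f : ℕ → ℕ → ℝ) :
    ∑ p ∈ haarIndicesBelow n, f p.1 p.2
      = ∑ j ∈ Finset.range n, ∑ k ∈ Finset.range (2 ^ j), f j k :=
  Finset.sum_finset_product _ _ _ fun p => by
    rw [mem_haarIndicesBelow, Finset.mem_range, Finset.mem_range]

lemma sum_le_tsum_sum_range_two_pow {f : ℕ → ℕ → ℝ} (hf : ∀ j k, 0 ≤ f j k)
    (hsum : Summable fun j => ∑ k ∈ Finset.range (2 ^ j), f j k) {F : Finset (ℕ × ℕ)}
    (hF : ∀ p ∈ F, p.2 < 2 ^ p.1) :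
    ∑ p ∈ F, f p.1 p.2 ≤ ∑' j, ∑ k ∈ Finset.range (2 ^ j), f j k := by
  have hsub : F ⊆ haarIndicesBelow (F.sup Prod.fst + 1) := fun p hp =>
    mem_haarIndicesBelow.2 ⟨Nat.lt_succ_of_le (Finset.le_sup (f := Prod.fst) hp), hF p hp⟩
  calc ∑ p ∈ F, f p.1 p.2 ≤ ∑ p ∈ haarIndicesBelow (F.sup Prod.fst + 1), f p.1 p.2 :=
        Finset.sum_le_sum_of_subset_of_nonneg hsub fun p _ _ => hf p.1 p.2
    _ = _ := sum_haarIndicesBelow _ f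
    _ ≤ _ := hsum.sum_le_tsum _ fun j _ => Finset.sum_nonneg fun k _ => hf j k

lemma summable_sum_range_two_pow_of_le_sq_haarCoeff {s : ℝ → ℝ} (hs : MemLp s 2 unif01)
    {f : ℕ → ℕ → ℝ} (hf₀ : ∀ j k, 0 ≤ f j k) (hf : ∀ j k, f j k ≤ haarCoeff s j k ^ 2) :
    Summable fun j => ∑ k ∈ Finset.range (2 ^ j), f j k := by
  refine summable_of_sum_range_le (c := ‖hs.toLp s‖ ^ 2)
    (fun j => Finset.sum_nonneg fun k _ => hf₀ j k) fun n => ?_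
  rw [← sum_haarIndicesBelow]
  exact (Finset.sum_le_sum fun p _ => hf p.1 p.2).trans
    (sum_sq_haarCoeff_le hs fun p hp => (mem_haarIndicesBelow.1 hp).2)

def weakTypeConst (q : ℝ) : ℝ := 2 ^ q / (1 - 2 ^ (q - 1))

lemma one_sub_two_rpow_sub_one_pos {q : ℝ} (hq : q < 1) : 0 < 1 - (2 : ℝ) ^ (q - 1) :=
  sub_pos.2 (Real.rpow_lt_one_of_one_lt_of_neg one_lt_two (by linarith))

lemma weakTypeConst_pos {q : ℝ} (hq : q < 1) : 0 < weakTypeConst q :=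
  div_pos (by positivity) (one_sub_two_rpow_sub_one_pos hq)

lemma two_rpow_add_weakTypeConst_mul {q : ℝ} (hq : q < 1) :
    2 ^ q + weakTypeConst q * 2 ^ (q - 1) = weakTypeConst q := by
  have := (one_sub_two_rpow_sub_one_pos hq).ne'
  rw [weakTypeConst]
  field_simp
  ring

lemma card_filter_lt_and_le_two_mul_le {ι : Type*} {F : Finset ι} {x : ι → ℝ} {A q : ℝ}
    (hx : ∀ i ∈ F, 0 ≤ x i)
    (hA : ∀ v, 0 < v → ∑ i ∈ F, (if x i ≤ v then x i else 0) ≤ A * v ^ q) {v : ℝ} (hv : 0 < v) :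
    (#(F.filter fun i => v < x i ∧ x i ≤ 2 * v) : ℝ) ≤ 2 ^ q * A * v ^ (q - 1) := by
  set G := F.filter fun i => v < x i ∧ x i ≤ 2 * v
  have hG : (#G : ℝ) * v ≤ 2 ^ q * A * v ^ (q - 1) * v := calc
    (#G : ℝ) * v ≤ ∑ i ∈ G, x i := by
      simpa using Finset.card_nsmul_le_sum G x v fun i hi => (Finset.mem_filter.1 hi).2.1.le
    _ = ∑ i ∈ G, (if x i ≤ 2 * v then x i else 0) :=
      Finset.sum_congr rfl fun i hi => (if_pos (Finset.mem_filter.1 hi).2.2).symm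
    _ ≤ ∑ i ∈ F, (if x i ≤ 2 * v then x i else 0) :=
      Finset.sum_le_sum_of_subset_of_nonneg (Finset.filter_subset _ _) fun i hi _ => by
        split_ifs
        exacts [hx i hi, le_rfl]
    _ ≤ A * (2 * v) ^ q := hA _ (by positivity)
    _ = 2 ^ q * A * v ^ (q - 1) * v := by
      rw [Real.mul_rpow zero_le_two hv.le, Real.rpow_sub_one hv.ne']
      field_simp
  exact le_of_mul_le_mul_right hG hv

theorem card_filter_lt_le_of_sum_truncation_le {ι : Type*} {F : Finset ι} {x : ι → ℝ} {A q : ℝ}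
    (hq : q < 1) (hx : ∀ i ∈ F, 0 ≤ x i)
    (hA : ∀ v, 0 < v → ∑ i ∈ F, (if x i ≤ v then x i else 0) ≤ A * v ^ q) {u : ℝ} (hu : 0 < u) :
    (#(F.filter (u < x ·)) : ℝ) ≤ weakTypeConst q * A * u ^ (q - 1) := by
  classical
  have hA₀ : 0 ≤ A := by
    have := (Finset.sum_nonneg fun i hi => by split_ifs; exacts [hx i hi, le_rfl]).trans
      (hA 1 one_pos)
    simpa using this
  suffices h : ∀ n : ℕ, ∀ u, 0 < u → (∀ i ∈ F, x i ≤ 2 ^ n * u) →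
      (#(F.filter (u < x ·)) : ℝ) ≤ weakTypeConst q * A * u ^ (q - 1) by
    obtain ⟨M, hM⟩ := (F.image x).exists_le
    obtain ⟨n, hn⟩ := pow_unbounded_of_one_lt (M / u) one_lt_two
    rw [div_lt_iff₀ hu] at hn
    exact h n u hu fun i hi => (hM _ (Finset.mem_image_of_mem x hi)).trans hn.le
  intro n
  induction n with
  | zero =>
    intro u hu hxu
    rw [Finset.filter_false_of_mem fun i hi => not_lt.2 (by simpa using hxu i hi)]
    have := weakTypeConst_pos hq
    simp only [Finset.card_empty, Nat.cast_zero]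
    positivity
  | succ n ih =>
    intro u hu hxu
    have hsplit : F.filter (u < x ·)
        ⊆ F.filter (fun i => u < x i ∧ x i ≤ 2 * u) ∪ F.filter (2 * u < x ·) := by
      intro i
      simp only [Finset.mem_filter, Finset.mem_union]
      rintro ⟨hi, hui⟩
      rcases le_or_gt (x i) (2 * u) with h | h
      exacts [Or.inl ⟨hi, hui, h⟩, Or.inr ⟨hi, h⟩]
    have ih' := ih (2 * u) (by positivity) fun i hi => by
      have := hxu i hi
      rw [pow_succ] at this
      linarith
    calc (#(F.filter (u < x ·)) : ℝ)
        ≤ #(F.filter fun i => u < x i ∧ x i ≤ 2 * u) + #(F.filter (2 * u < x ·)) := by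
          exact_mod_cast (Finset.card_le_card hsplit).trans (Finset.card_union_le _ _)
      _ ≤ 2 ^ q * A * u ^ (q - 1) + weakTypeConst q * A * (2 * u) ^ (q - 1) :=
          add_le_add (card_filter_lt_and_le_two_mul_le hx hA hu) ih'
      _ = (2 ^ q + weakTypeConst q * 2 ^ (q - 1)) * A * u ^ (q - 1) := by
          rw [Real.mul_rpow zero_le_two hu.le]
          ring
      _ = weakTypeConst q * A * u ^ (q - 1) := by rw [two_rpow_add_weakTypeConst_mul hq]

lemma exists_finset_coe_eq_of_forall_card_le {α : Type*} {S : Set α} {D : ℕ}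
    (h : ∀ F : Finset α, ↑F ⊆ S → #F ≤ D) : ∃ Λ : Finset α, ↑Λ = S ∧ #Λ ≤ D := by
  have hS : S.Finite := Set.not_infinite.1 fun hinf => by
    obtain ⟨F, hFS, hF⟩ := hinf.exists_subset_card_eq (D + 1)
    have := h F hFS
    omega
  exact ⟨hS.toFinset, hS.coe_toFinset, h _ hS.coe_toFinset.subset⟩

section WeakBesov

variable {γ R' : ℝ} {s : ℝ → ℝ}

lemma sum_truncation_le_of_mem_weakBesovBody (hs : s ∈ weakBesovBody γ R')
    {F : Finset (ℕ × ℕ)} (hF : ∀ p ∈ F, p.2 < 2 ^ p.1) {v : ℝ} (hv : 0 < v) :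
    ∑ p ∈ F, (if haarCoeff s p.1 p.2 ^ 2 ≤ v then haarCoeff s p.1 p.2 ^ 2 else 0)
      ≤ R' ^ 2 * v ^ (2 * γ / (1 + 2 * γ)) := by
  have hf₀ (j k : ℕ) : 0 ≤ if haarCoeff s j k ^ 2 ≤ v then haarCoeff s j k ^ 2 else 0 := by
    positivity
  have hf (j k : ℕ) : (if haarCoeff s j k ^ 2 ≤ v then haarCoeff s j k ^ 2 else 0)
      ≤ haarCoeff s j k ^ 2 := by
    split_ifs
    exacts [le_rfl, sq_nonneg _]
  exact (sum_le_tsum_sum_range_two_pow hf₀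
    (summable_sum_range_two_pow_of_le_sq_haarCoeff hs.2.1 hf₀ hf) hF).trans (hs.2.2 v hv)

lemma card_le_of_lt_sq_haarCoeff (hγ : 0 < 1 + 2 * γ) (hs : s ∈ weakBesovBody γ R')
    {u : ℝ} (hu : 0 < u) {F : Finset (ℕ × ℕ)}
    (hF : ∀ p ∈ F, p.2 < 2 ^ p.1 ∧ u < haarCoeff s p.1 p.2 ^ 2) :
    (#F : ℝ) ≤ weakTypeConst (2 * γ / (1 + 2 * γ)) * R' ^ 2 * u ^ (-(1 / (1 + 2 * γ))) := by
  have hq : 2 * γ / (1 + 2 * γ) < 1 := by rw [div_lt_one hγ]; linarith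
  have hexp : 2 * γ / (1 + 2 * γ) - 1 = -(1 / (1 + 2 * γ)) := by field_simp; ring
  have h := card_filter_lt_le_of_sum_truncation_le (F := F)
    (x := fun p => haarCoeff s p.1 p.2 ^ 2) (A := R' ^ 2) hq (fun _ _ => sq_nonneg _)
    (fun v hv => sum_truncation_le_of_mem_weakBesovBody hs (fun p hp => (hF p hp).1) hv) hu
  rw [Finset.filter_true_of_mem fun p hp => (hF p hp).2, hexp] at h
  exact h

lemma tsum_sq_haarCoeff_compl_le (hs : s ∈ weakBesovBody γ R') {u : ℝ} (hu : 0 < u)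
    {Λ : Finset (ℕ × ℕ)} (hΛ : ∀ j k, k < 2 ^ j → (j, k) ∉ Λ → haarCoeff s j k ^ 2 ≤ u) :
    ∑' j : ℕ, ∑ k ∈ Finset.range (2 ^ j), (if (j, k) ∈ Λ then 0 else haarCoeff s j k ^ 2)
      ≤ R' ^ 2 * u ^ (2 * γ / (1 + 2 * γ)) := by
  have hle (j : ℕ) :
      ∑ k ∈ Finset.range (2 ^ j), (if (j, k) ∈ Λ then 0 else haarCoeff s j k ^ 2)
        ≤ ∑ k ∈ Finset.range (2 ^ j),
            (if haarCoeff s j k ^ 2 ≤ u then haarCoeff s j k ^ 2 else 0) :=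
    Finset.sum_le_sum fun k hk => by
      by_cases hjk : (j, k) ∈ Λ
      · rw [if_pos hjk]
        positivity
      · rw [if_neg hjk, if_pos (hΛ j k (Finset.mem_range.1 hk) hjk)]
  refine (Summable.tsum_le_tsum hle ?_ ?_).trans (hs.2.2 u hu) <;>
    refine summable_sum_range_two_pow_of_le_sq_haarCoeff hs.2.1
      (fun j k => ?_) (fun j k => ?_) <;>
    split_ifs <;> first | positivity | exact le_rfl

lemma card_le_of_half_lt_abs_haarCoeff (hγ : 0 < 1 + 2 * γ) (hs : s ∈ weakBesovBody γ R')
    {t : ℝ} (ht : 0 < t) {F : Finset (ℕ × ℕ)}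
    (hF : ∀ p ∈ F, p.2 < 2 ^ p.1 ∧ t / 2 < |haarCoeff s p.1 p.2|) :
    (#F : ℝ) ≤ 2 ^ (2 / (1 + 2 * γ)) * weakTypeConst (2 * γ / (1 + 2 * γ)) * R' ^ 2
      * t ^ (-(2 / (1 + 2 * γ))) := by
  have h := card_le_of_lt_sq_haarCoeff hγ hs (u := (t / 2) ^ 2) (by positivity) fun p hp =>
    ⟨(hF p hp).1, by
      simpa only [sq_abs] using pow_lt_pow_left₀ (hF p hp).2 (by positivity) two_ne_zero⟩
  have hexp : ((2 : ℕ) : ℝ) * -(1 / (1 + 2 * γ)) = -(2 / (1 + 2 * γ)) := by push_cast; ring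
  rw [← Real.rpow_natCast_mul (by positivity), hexp, Real.div_rpow ht.le zero_le_two,
    Real.rpow_neg zero_le_two, div_inv_eq_mul] at h
  linarith

lemma exists_finset_tsum_sq_haarCoeff_compl_le (hγ : 0 < 1 + 2 * γ) (hR' : 0 < R')
    (hs : s ∈ weakBesovBody γ R') {D : ℕ} (hD : 1 ≤ D) :
    ∃ Λ : Finset (ℕ × ℕ), (∀ p ∈ Λ, p.2 < 2 ^ p.1) ∧ #Λ ≤ D ∧
      ∑' j : ℕ, ∑ k ∈ Finset.range (2 ^ j), (if (j, k) ∈ Λ then 0 else haarCoeff s j k ^ 2)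
        ≤ weakTypeConst (2 * γ / (1 + 2 * γ)) ^ (2 * γ) * R' ^ (2 + 4 * γ)
          * (D : ℝ) ^ (-(2 * γ)) := by
  set K := weakTypeConst (2 * γ / (1 + 2 * γ))
  have hK : 0 < K := weakTypeConst_pos (by rw [div_lt_one hγ]; linarith)
  have hD' : (0 : ℝ) < D := by exact_mod_cast hD
  have hb : 0 < K * R' ^ 2 / D := by positivity
  -- the threshold `u` at which the counting bound equals `D`
  set u := (K * R' ^ 2 / D) ^ (1 + 2 * γ)
  have hu : 0 < u := by positivity
  have hcard : K * R' ^ 2 * u ^ (-(1 / (1 + 2 * γ))) = D := by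
    rw [← Real.rpow_mul hb.le, show (1 + 2 * γ) * -(1 / (1 + 2 * γ)) = -1 by field_simp,
      Real.rpow_neg_one]
    field_simp
  have htail : R' ^ 2 * u ^ (2 * γ / (1 + 2 * γ))
      = K ^ (2 * γ) * R' ^ (2 + 4 * γ) * (D : ℝ) ^ (-(2 * γ)) := by
    rw [← Real.rpow_mul hb.le, show (1 + 2 * γ) * (2 * γ / (1 + 2 * γ)) = 2 * γ by field_simp,
      Real.div_rpow (by positivity) hD'.le, Real.mul_rpow hK.le (by positivity),
      Real.rpow_neg hD'.le, ← Real.rpow_natCast_mul hR'.le, Real.rpow_add hR',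
      ← Real.rpow_natCast R' 2]
    push_cast
    ring_nf
  obtain ⟨Λ, hΛ, hΛcard⟩ := exists_finset_coe_eq_of_forall_card_le
    (S := {p : ℕ × ℕ | p.2 < 2 ^ p.1 ∧ u < haarCoeff s p.1 p.2 ^ 2}) (D := D) fun F hF => by
      have := card_le_of_lt_sq_haarCoeff hγ hs hu fun p hp => hF hp
      rw [hcard] at this
      exact_mod_cast this
  refine ⟨Λ, fun p hp => ?_, hΛcard, ?_⟩
  · rw [← Finset.mem_coe, hΛ] at hp
    exact hp.1
  · rw [← htail]
    refine tsum_sq_haarCoeff_compl_le hs hu fun j k hk hjk => not_lt.1 fun h => hjk ?_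
    rw [← Finset.mem_coe, hΛ]
    exact ⟨hk, h⟩

end WeakBesov

/-- Coefficient-counting and nonlinear-approximation properties of the weak Besov body
`W_γ(R')` (used in the proof of Proposition 2 of Fromont–Laurent–Reynaud-Bouret):
(a) at most `C(γ) R'² t^{-2/(1+2γ)}` Haar coefficients satisfy `|α_{(j,k)}| > t/2`;
(b) for every `D ≥ 1` some set `Λ` of at most `D` indices captures all but
`C(γ) R'^{2+4γ} D^{-2γ}` of the energy `Σ α²`. -/
theorem weak_besov_coefficient_bounds (γ : ℝ) (hγ : 0 < γ) :
    ∃ C : ℝ, 0 < C ∧ ∀ R' : ℝ, 0 < R' → ∀ s ∈ weakBesovBody γ R',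
      (∀ t : ℝ, 0 < t → ∀ F : Finset (ℕ × ℕ),
        (∀ p ∈ F, p.2 < 2 ^ p.1 ∧ t / 2 < |haarCoeff s p.1 p.2|) →
        (F.card : ℝ) ≤ C * R' ^ 2 * t ^ (-(2 / (1 + 2 * γ)))) ∧
      (∀ D : ℕ, 1 ≤ D → ∃ Λ : Finset (ℕ × ℕ),
        (∀ p ∈ Λ, p.2 < 2 ^ p.1) ∧ Λ.card ≤ D ∧
        ∑' j : ℕ, ∑ k ∈ Finset.range (2 ^ j),
            (if (j, k) ∈ Λ then 0 else (haarCoeff s j k) ^ 2)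
          ≤ C * R' ^ (2 + 4 * γ) * (D : ℝ) ^ (-(2 * γ))) := by
  have hγ' : 0 < 1 + 2 * γ := by linarith
  set K := weakTypeConst (2 * γ / (1 + 2 * γ))
  have hK : 0 < K := weakTypeConst_pos (by rw [div_lt_one hγ']; linarith)
  refine ⟨max (2 ^ (2 / (1 + 2 * γ)) * K) (K ^ (2 * γ)), lt_max_of_lt_left (by positivity),
    fun R' hR' s hs => ⟨fun t ht F hF => ?_, fun D hD => ?_⟩⟩
  · refine (card_le_of_half_lt_abs_haarCoeff hγ' hs ht hF).trans ?_
    gcongr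
    exact le_max_left _ _
  · obtain ⟨Λ, hΛ, hcard, htail⟩ := exists_finset_tsum_sq_haarCoeff_compl_le hγ' hR' hs hD
    refine ⟨Λ, hΛ, hcard, htail.trans ?_⟩
    gcongr
    exact le_max_right _ _
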